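/- arXiv:2403.15654 — 2 statements merged into one kernel-verified Lean document; each statement's English description precedes it below -/
import Mathlib

section
/- If f : R^d → R is differentiable and satisfies the Polyak–Łojasiewicz condition with parameter μ > 0, i.e., ||∇f(x)||^2 ≥ 2μ(f(x) − f*) for all x where f* = inf f is attained on a nonempty closed set X* of minimizers, then f satisfies the error bound condition with the same parameter: ||∇f(x)|| ≥ μ · dist(x, X*) for all x, provided f is L-smooth. -/
open InnerProductSpace

section Aux

variable {E : Type*} [NormedAddCommGroup E] [InnerProductSpace ℝ E] [CompleteSpace E]

theorem hasDerivAt_line (f : E → ℝ) (x v : E) (t : ℝ) (h : DifferentiableAt ℝ f (x + t • v)) :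
    HasDerivAt (fun s : ℝ => f (x + s • v)) ⟪gradient f (x + t • v), v⟫_ℝ t := by
  have h1 : HasDerivAt (fun s : ℝ => x + s • v) v t := by
    simpa using ((hasDerivAt_id t).smul_const v).const_add x
  have h2 := h.hasFDerivAt.comp_hasDerivAt t h1
  have h3 : (fderiv ℝ f (x + t • v)) v = ⟪gradient f (x + t • v), v⟫_ℝ := by
    have := h.hasGradientAt.hasFDerivAt
    rw [this.fderiv]
    simp [InnerProductSpace.toDual_apply_apply]
  rw [← h3]; exact h2

theorem descent_lemma (f : E → ℝ) (L : ℝ) (hL : 0 < L) (hdiff : Differentiable ℝ f)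
    (hlip : LipschitzWith (Real.toNNReal L) (gradient f)) (x y : E) :
    f y ≤ f x + ⟪gradient f x, y - x⟫_ℝ + L / 2 * ‖y - x‖ ^ 2 := by
  set v := y - x with hv
  set φ : ℝ → ℝ := fun t => ⟪gradient f (x + t • v), v⟫_ℝ with hφ
  have hder : ∀ t : ℝ, HasDerivAt (fun s => f (x + s • v)) (φ t) t := fun t =>
    hasDerivAt_line f x v t (hdiff _)
  have hcont : Continuous φ := by
    apply Continuous.inner
    · exact hlip.continuous.comp (by continuity)
    · exact continuous_const
  have hftc : ∫ t in (0:ℝ)..1, φ t = f (x + (1:ℝ) • v) - f (x + (0:ℝ) • v) :=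
    intervalIntegral.integral_eq_sub_of_hasDerivAt (f := fun s : ℝ => f (x + s • v))
      (fun t _ => hder t) (hcont.intervalIntegrable 0 1)
  have hbound : ∀ t ∈ Set.Icc (0:ℝ) 1, φ t ≤ φ 0 + L * ‖v‖ ^ 2 * t := by
    intro t ht
    have h1 : φ t - φ 0 = ⟪gradient f (x + t • v) - gradient f (x + (0:ℝ) • v), v⟫_ℝ := by
      rw [inner_sub_left]
    have h2 : ‖gradient f (x + t • v) - gradient f (x + (0:ℝ) • v)‖ ≤ L * (t * ‖v‖) := by
      have he : x + t • v - (x + (0:ℝ) • v) = t • v := by module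
      calc ‖gradient f (x + t • v) - gradient f (x + (0:ℝ) • v)‖
          ≤ (Real.toNNReal L : ℝ) * ‖t • v‖ := by
            simpa [dist_eq_norm, he] using hlip.dist_le_mul (x + t • v) (x + (0:ℝ) • v)
        _ = L * (t * ‖v‖) := by
            rw [Real.coe_toNNReal _ hL.le, norm_smul, Real.norm_eq_abs, abs_of_nonneg ht.1]
    have h3 : φ t - φ 0 ≤ L * (t * ‖v‖) * ‖v‖ := by
      rw [h1]
      calc ⟪gradient f (x + t • v) - gradient f (x + (0:ℝ) • v), v⟫_ℝ
          ≤ ‖gradient f (x + t • v) - gradient f (x + (0:ℝ) • v)‖ * ‖v‖ :=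
            real_inner_le_norm _ _
        _ ≤ L * (t * ‖v‖) * ‖v‖ := by
            apply mul_le_mul_of_nonneg_right h2 (norm_nonneg v)
    nlinarith [h3]
  have hint : ∫ t in (0:ℝ)..1, φ t ≤ ∫ t in (0:ℝ)..1, (φ 0 + L * ‖v‖ ^ 2 * t) := by
    apply intervalIntegral.integral_mono_on (by norm_num)
    · exact hcont.intervalIntegrable 0 1
    · exact (Continuous.intervalIntegrable (by continuity) 0 1)
    · exact hbound
  have hval : ∫ t in (0:ℝ)..1, (φ 0 + L * ‖v‖ ^ 2 * t) = φ 0 + L / 2 * ‖v‖ ^ 2 := by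
    rw [intervalIntegral.integral_add intervalIntegrable_const
      ((show Continuous fun t : ℝ => L * ‖v‖ ^ 2 * t from continuous_const.mul continuous_id).intervalIntegrable 0 1),
      intervalIntegral.integral_const_mul, integral_id]
    norm_num
    ring
  have h0 : φ 0 = ⟪gradient f x, y - x⟫_ℝ := by simp [hφ, hv]
  have h1 : x + (1:ℝ) • v = y := by simp [hv]
  have h00 : x + (0:ℝ) • v = x := by simp
  rw [h1, h00] at hftc
  linarith [hftc ▸ (hint.trans_eq hval), hftc]

theorem gradient_zero_of_min (f : E → ℝ) (z : E) (h : ∀ w, f z ≤ f w) :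
    gradient f z = 0 := by
  have hloc : IsLocalMin f z := Filter.Eventually.of_forall h
  have hf : fderiv ℝ f z = 0 := hloc.fderiv_eq_zero
  show (InnerProductSpace.toDual ℝ E).symm (fderiv ℝ f z) = 0
  rw [hf, map_zero]

/-- gradient descent sequence -/
noncomputable def gdSeq (f : E → ℝ) (η : ℝ) (x0 : E) : ℕ → E
  | 0 => x0
  | n + 1 => gdSeq f η x0 n - η • gradient f (gdSeq f η x0 n)

end Aux

section Key

variable {E : Type*} [NormedAddCommGroup E] [InnerProductSpace ℝ E] [CompleteSpace E]

set_option maxHeartbeats 1000000 in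
theorem key_estimate (f : E → ℝ) (L μ fstar : ℝ)
    (hμ : 0 < μ) (hL : 0 < L)
    (hdiff : Differentiable ℝ f)
    (hsmooth : LipschitzWith (Real.toNNReal L) (gradient f))
    (Xstar : Set E) (hXstar : Xstar = {x | f x = fstar})
    (hmin : ∀ x, fstar ≤ f x)
    (hPL : ∀ x, 2 * μ * (f x - fstar) ≤ ‖gradient f x‖ ^ 2)
    (x0 : E) (η : ℝ) (hη : 0 < η) (hη1 : η * L ≤ 1) (hη2 : 2 * μ * η ≤ 1) :
    (1 - L * η / 2) * (μ * Metric.infDist x0 Xstar) ≤ ‖gradient f x0‖ := by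
  set g : E → E := gradient f with hg
  set seq : ℕ → E := gdSeq f η x0 with hseq
  have hseq0 : seq 0 = x0 := rfl
  have hseqS : ∀ n, seq (n + 1) = seq n - η • g (seq n) := fun n => rfl
  set c : ℝ := η * (1 - L * η / 2) with hc
  have hLη : 1 - L * η / 2 ≥ 1 / 2 := by nlinarith
  have hcpos : 0 < c := by rw [hc]; nlinarith
  set Δ : ℕ → ℝ := fun n => f (seq n) - fstar with hΔ
  set a : ℕ → ℝ := fun n => Real.sqrt (Δ n) with ha
  have hΔnn : ∀ n, 0 ≤ Δ n := fun n => by simp [hΔ, sub_nonneg, hmin]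
  -- descent step
  have hdesc : ∀ n, Δ (n + 1) ≤ Δ n - c * ‖g (seq n)‖ ^ 2 := by
    intro n
    have h := descent_lemma f L hL hdiff hsmooth (seq n) (seq (n + 1))
    have he : seq (n + 1) - seq n = -(η • g (seq n)) := by rw [hseqS]; abel
    rw [he] at h
    have hinner : ⟪g (seq n), -(η • g (seq n))⟫_ℝ = -(η * ‖g (seq n)‖ ^ 2) := by
      rw [inner_neg_right, real_inner_smul_right, real_inner_self_eq_norm_sq]
    have hnorm : ‖-(η • g (seq n))‖ ^ 2 = η ^ 2 * ‖g (seq n)‖ ^ 2 := by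
      rw [norm_neg, norm_smul, Real.norm_eq_abs, abs_of_nonneg hη.le]; ring
    rw [hinner, hnorm] at h
    simp only [hΔ, hc]
    nlinarith [h]
  -- the gradient vanishes when Δ n = 0
  have hgzero : ∀ n, Δ n = 0 → g (seq n) = 0 := by
    intro n h0
    apply gradient_zero_of_min
    intro w
    have : f (seq n) = fstar := by simpa [hΔ, sub_eq_zero] using h0
    rw [this]; exact hmin w
  -- key per-step inequality
  set K : ℝ := Real.sqrt (2 * μ) * (1 - L * η / 2) / 2 with hK
  have hsq2μ : 0 < Real.sqrt (2 * μ) := Real.sqrt_pos.2 (by linarith)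
  have hKpos : 0 < K := by rw [hK]; positivity
  have hstep : ∀ n, K * ‖seq (n + 1) - seq n‖ ≤ a n - a (n + 1) := by
    intro n
    have hns : ‖seq (n + 1) - seq n‖ = η * ‖g (seq n)‖ := by
      rw [hseqS]
      have : seq n - η • g (seq n) - seq n = -(η • g (seq n)) := by abel
      rw [this, norm_neg, norm_smul, Real.norm_eq_abs, abs_of_nonneg hη.le]
    set G : ℝ := ‖g (seq n)‖ with hG
    have hGnn : 0 ≤ G := norm_nonneg _
    have hA := hΔnn n
    have hB := hΔnn (n + 1)
    have hAB := hdesc n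
    have hpl : 2 * μ * Δ n ≤ G ^ 2 := hPL (seq n)
    rw [hns]
    rcases eq_or_lt_of_le hA with h0 | hApos
    · -- Δ n = 0 case
      have hG0 : G = 0 := by rw [hG, hgzero n h0.symm, norm_zero]
      have hB0 : Δ (n + 1) = 0 := le_antisymm (by nlinarith) hB
      simp [ha, ← h0, hB0, hG0]
    · -- Δ n > 0 case
      have hsA : 0 < Real.sqrt (Δ n) := Real.sqrt_pos.2 hApos
      have hsAsq : Real.sqrt (Δ n) * Real.sqrt (Δ n) = Δ n := Real.mul_self_sqrt hA
      have hμG : Real.sqrt (2 * μ) * Real.sqrt (Δ n) ≤ G := by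
        rw [← Real.sqrt_mul (by linarith) (Δ n)]
        calc Real.sqrt (2 * μ * Δ n) ≤ Real.sqrt (G ^ 2) := Real.sqrt_le_sqrt hpl
          _ = G := by rw [Real.sqrt_sq hGnn]
      set t : ℝ := Real.sqrt (2 * μ) * c * G / 2 with ht
      have hKη : K * (η * G) = t := by rw [hK, ht, hc]; ring
      have htnn : 0 ≤ t := by positivity
      have h2t : 2 * Real.sqrt (Δ n) * t ≤ c * G ^ 2 := by
        have := mul_le_mul_of_nonneg_right hμG (mul_nonneg hcpos.le hGnn)
        calc 2 * Real.sqrt (Δ n) * t = Real.sqrt (2 * μ) * Real.sqrt (Δ n) * (c * G) := by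
              rw [ht]; ring
          _ ≤ G * (c * G) := this
          _ = c * G ^ 2 := by ring
      have hcG : c * G ^ 2 ≤ Δ n := by linarith [hAB, hB]
      have htle : t ≤ Real.sqrt (Δ n) := by nlinarith [h2t, hcG, hsAsq, hsA, htnn]
      have hBle : Δ (n + 1) ≤ (Real.sqrt (Δ n) - t) ^ 2 := by nlinarith [h2t, hAB, hsAsq, htnn]
      have : Real.sqrt (Δ (n + 1)) ≤ Real.sqrt (Δ n) - t := by
        calc Real.sqrt (Δ (n + 1)) ≤ Real.sqrt ((Real.sqrt (Δ n) - t) ^ 2) :=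
              Real.sqrt_le_sqrt hBle
          _ = Real.sqrt (Δ n) - t := Real.sqrt_sq (by linarith)
      rw [hKη]
      simp only [ha]
      linarith
  -- telescoping bound
  have htel : ∀ n, ∑ k ∈ Finset.range n, ‖seq (k + 1) - seq k‖ ≤ a 0 / K := by
    intro n
    rw [le_div_iff₀ hKpos]
    have h1 : ∑ k ∈ Finset.range n, (K * ‖seq (k + 1) - seq k‖) ≤
        ∑ k ∈ Finset.range n, (a k - a (k + 1)) :=
      Finset.sum_le_sum fun k _ => hstep k
    rw [Finset.sum_range_sub' a n] at h1
    have h2 : 0 ≤ a n := Real.sqrt_nonneg _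
    rw [← Finset.mul_sum] at h1
    linarith [h1]
  -- summability and limit
  have hdistnorm : ∀ n, dist (seq n) (seq (n + 1)) = ‖seq (n + 1) - seq n‖ := fun n => by
    rw [dist_eq_norm, norm_sub_rev]
  have hsum : Summable (fun n => dist (seq n) (seq (n + 1))) := by
    apply summable_of_sum_range_le (c := a 0 / K) (fun n => dist_nonneg)
    intro n
    calc ∑ k ∈ Finset.range n, dist (seq k) (seq (k + 1))
        = ∑ k ∈ Finset.range n, ‖seq (k + 1) - seq k‖ := by
          exact Finset.sum_congr rfl fun k _ => hdistnorm k
      _ ≤ a 0 / K := htel n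
  obtain ⟨y, hy⟩ := cauchySeq_tendsto_of_complete (cauchySeq_of_summable_dist hsum)
  have hdxy : dist x0 y ≤ a 0 / K := by
    have h1 := dist_le_tsum_dist_of_tendsto₀ hsum hy
    have h2 : (∑' n, dist (seq n) (seq (n + 1))) ≤ a 0 / K := by
      apply Real.tsum_le_of_sum_range_le (fun n => dist_nonneg)
      intro n
      calc ∑ k ∈ Finset.range n, dist (seq k) (seq (k + 1))
          = ∑ k ∈ Finset.range n, ‖seq (k + 1) - seq k‖ :=
            Finset.sum_congr rfl fun k _ => hdistnorm k
        _ ≤ a 0 / K := htel n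
    rw [hseq0] at h1
    linarith
  -- Δ n → 0
  set r : ℝ := 1 - 2 * μ * c with hr
  have hr0 : 0 ≤ r := by rw [hr, hc]; nlinarith
  have hr1 : r < 1 := by rw [hr]; nlinarith
  have hgeo : ∀ n, Δ (n + 1) ≤ r * Δ n := by
    intro n
    have h1 := hdesc n
    have h2 := hPL (seq n)
    have : c * (2 * μ * Δ n) ≤ c * ‖g (seq n)‖ ^ 2 :=
      mul_le_mul_of_nonneg_left h2 hcpos.le
    rw [hr]; nlinarith
  have hΔbound : ∀ n, Δ n ≤ r ^ n * Δ 0 := by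
    intro n
    induction n with
    | zero => simp
    | succ n ih =>
      calc Δ (n + 1) ≤ r * Δ n := hgeo n
        _ ≤ r * (r ^ n * Δ 0) := mul_le_mul_of_nonneg_left ih hr0
        _ = r ^ (n + 1) * Δ 0 := by ring
  have hΔlim : Filter.Tendsto Δ Filter.atTop (nhds 0) := by
    apply squeeze_zero hΔnn hΔbound
    rw [show (0:ℝ) = 0 * Δ 0 by ring]
    exact (tendsto_pow_atTop_nhds_zero_of_lt_one hr0 hr1).mul_const (Δ 0)
  -- f y = fstar
  have hfy : f y = fstar := by
    have h1 : Filter.Tendsto (fun n => f (seq n)) Filter.atTop (nhds (f y)) :=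
      (hdiff.continuous.tendsto y).comp hy
    have h2 : Filter.Tendsto (fun n => f (seq n)) Filter.atTop (nhds fstar) := by
      have h3 := hΔlim.add_const fstar
      rw [zero_add] at h3
      have h4 : (fun n => Δ n + fstar) = fun n => f (seq n) := by
        funext n; simp [hΔ]
      rwa [h4] at h3
    exact tendsto_nhds_unique h1 h2
  have hymem : y ∈ Xstar := by rw [hXstar]; exact hfy
  have hD : Metric.infDist x0 Xstar ≤ a 0 / K :=
    le_trans (Metric.infDist_le_dist_of_mem hymem) hdxy
  -- conclude
  have hplx : Real.sqrt (2 * μ) * a 0 ≤ ‖g x0‖ := by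
    have h1 : Real.sqrt (2 * μ * Δ 0) ≤ ‖g x0‖ := by
      calc Real.sqrt (2 * μ * Δ 0) ≤ Real.sqrt (‖g (seq 0)‖ ^ 2) :=
            Real.sqrt_le_sqrt (hPL (seq 0))
        _ = ‖g x0‖ := by rw [Real.sqrt_sq (norm_nonneg _), hseq0]
    rwa [Real.sqrt_mul (by linarith) (Δ 0)] at h1
  have hDnn : 0 ≤ Metric.infDist x0 Xstar := Metric.infDist_nonneg
  have hstep2 : (1 - L * η / 2) * (μ * Metric.infDist x0 Xstar) ≤
      (1 - L * η / 2) * (μ * (a 0 / K)) := by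
    apply mul_le_mul_of_nonneg_left _ (by linarith)
    exact mul_le_mul_of_nonneg_left hD hμ.le
  have heq : (1 - L * η / 2) * (μ * (a 0 / K)) = Real.sqrt (2 * μ) * a 0 := by
    have h2μ : Real.sqrt (2 * μ) * Real.sqrt (2 * μ) = 2 * μ := Real.mul_self_sqrt (by linarith)
    have hKne : K ≠ 0 := ne_of_gt hKpos
    have key : Real.sqrt (2 * μ) * K = μ * (1 - L * η / 2) := by
      calc Real.sqrt (2 * μ) * K
          = Real.sqrt (2 * μ) * Real.sqrt (2 * μ) * (1 - L * η / 2) / 2 := by rw [hK]; ring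
        _ = μ * (1 - L * η / 2) := by rw [h2μ]; ring
    have h1 : (1 - L * η / 2) * (μ * (a 0 / K)) = μ * (1 - L * η / 2) * (a 0 / K) := by ring
    rw [h1, ← key, mul_assoc, mul_comm K (a 0 / K), div_mul_cancel₀ _ hKne]
  linarith [hstep2, heq ▸ hstep2]

end Key

theorem stmt2 {d : ℕ} (f : EuclideanSpace ℝ (Fin d) → ℝ) (L μ fstar : ℝ)
    (hμ : 0 < μ) (hL : 0 < L)
    (hdiff : Differentiable ℝ f)
    (hsmooth : LipschitzWith (Real.toNNReal L) (gradient f))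
    (Xstar : Set (EuclideanSpace ℝ (Fin d)))
    (hXstar : Xstar = {x | f x = fstar})
    (hmin : ∀ x, fstar ≤ f x)
    (hne : Xstar.Nonempty) (hclosed : IsClosed Xstar)
    (hPL : ∀ x, 2 * μ * (f x - fstar) ≤ ‖gradient f x‖ ^ 2) :
    ∀ x, μ * Metric.infDist x Xstar ≤ ‖gradient f x‖ := by
  intro x0
  set D := Metric.infDist x0 Xstar with hD
  have hDnn : 0 ≤ D := Metric.infDist_nonneg
  have hμD : 0 ≤ μ * D := mul_nonneg hμ.le hDnn
  apply le_of_forall_pos_le_add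
  intro ε hε
  set η : ℝ := min (1 / L) (min (1 / (2 * μ)) (ε / (L * (μ * D + 1)))) with hηdef
  have hηpos : 0 < η := by
    apply lt_min (by positivity)
    apply lt_min (by positivity) (by positivity)
  have hη1 : η * L ≤ 1 := by
    have h := min_le_left (1 / L) (min (1 / (2 * μ)) (ε / (L * (μ * D + 1))))
    rw [← hηdef] at h
    rw [← le_div_iff₀ hL] at *
    exact h
  have hη2 : 2 * μ * η ≤ 1 := by
    have h := (min_le_right (1 / L) _).trans (min_le_left (1 / (2 * μ)) (ε / (L * (μ * D + 1))))
    rw [← hηdef] at h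
    have h2μ : (0:ℝ) < 2 * μ := by linarith
    calc 2 * μ * η ≤ 2 * μ * (1 / (2 * μ)) := by
          exact mul_le_mul_of_nonneg_left h h2μ.le
      _ = 1 := by field_simp
  have hη3 : η ≤ ε / (L * (μ * D + 1)) :=
    (min_le_right (1 / L) _).trans (min_le_right (1 / (2 * μ)) _)
  have hkey := key_estimate f L μ fstar hμ hL hdiff hsmooth Xstar hXstar hmin hPL x0 η
    hηpos hη1 hη2
  rw [← hD] at hkey
  have hεb : L * η / 2 * (μ * D) ≤ ε := by
    have hpos : (0:ℝ) < L * (μ * D + 1) := by positivity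
    have h1 : η * (L * (μ * D + 1)) ≤ ε := by
      rw [← le_div_iff₀ hpos]; exact hη3
    nlinarith [hηpos]
  nlinarith [hkey, hεb, hμD]
end

section
/- Let 0 < ρ < 1 and let z_r be a positive sequence satisfying z_r ≤ (1 + (1−ρ)/8)^{r−j} z_j for all j ≤ r (an 8/(1−ρ)-slow increasing sequence). Suppose nonnegative S_r satisfies S_r ≤ c ∑_{j=0}^{r−1} ((3+ρ)/4)^{r−j} u_j for all r with S_0 = 0 and nonnegative u_j. Then ∑_{r=0}^R z_r S_r ≤ (8c/(1−ρ)) ∑_{j=0}^{R} z_j u_j. -/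
theorem stmt19 (ρ : ℝ) (h0 : 0 < ρ) (h1 : ρ < 1) (c : ℝ) (hc : 0 ≤ c)
    (z S u : ℕ → ℝ) (hz : ∀ r, 0 < z r)
    (hslow : ∀ j r, j ≤ r → z r ≤ (1 + (1 - ρ) / 8) ^ (r - j) * z j)
    (hu : ∀ j, 0 ≤ u j) (hSnn : ∀ r, 0 ≤ S r) (hS0 : S 0 = 0)
    (hS : ∀ r, S r ≤ c * ∑ j ∈ Finset.range r, ((3 + ρ) / 4) ^ (r - j) * u j)
    (R : ℕ) :
    ∑ r ∈ Finset.range (R + 1), z r * S r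
      ≤ 8 * c / (1 - ρ) * ∑ j ∈ Finset.range (R + 1), z j * u j := by
  set ε : ℝ := (1 - ρ) / 8 with hεdef
  have hε0 : 0 < ε := by rw [hεdef]; linarith
  have hε1 : ε < 1 := by rw [hεdef]; linarith
  have ha0 : (0:ℝ) ≤ 1 - ε := by linarith
  -- step 1: pointwise bound
  have key : ∀ r, z r * S r ≤ c * ∑ j ∈ Finset.range r, (1 - ε) ^ (r - j) * (z j * u j) := by
    intro r
    have h1 : z r * S r ≤ z r * (c * ∑ j ∈ Finset.range r, ((3 + ρ) / 4) ^ (r - j) * u j) :=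
      mul_le_mul_of_nonneg_left (hS r) (hz r).le
    refine h1.trans ?_
    rw [show z r * (c * ∑ j ∈ Finset.range r, ((3 + ρ) / 4) ^ (r - j) * u j)
        = c * ∑ j ∈ Finset.range r, ((3 + ρ) / 4) ^ (r - j) * u j * z r by
      rw [← Finset.sum_mul]; ring]
    refine mul_le_mul_of_nonneg_left (Finset.sum_le_sum fun j hj => ?_) hc
    have hjr : j ≤ r := le_of_lt (Finset.mem_range.mp hj)
    have hq0 : (0:ℝ) ≤ (3 + ρ) / 4 := by linarith
    calc ((3 + ρ) / 4) ^ (r - j) * u j * z r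
        ≤ ((3 + ρ) / 4) ^ (r - j) * u j * ((1 + ε) ^ (r - j) * z j) := by
          exact mul_le_mul_of_nonneg_left (hslow j r hjr)
            (mul_nonneg (pow_nonneg hq0 _) (hu j))
      _ = (((3 + ρ) / 4) * (1 + ε)) ^ (r - j) * (z j * u j) := by
          rw [mul_pow]; ring
      _ ≤ (1 - ε) ^ (r - j) * (z j * u j) := by
          refine mul_le_mul_of_nonneg_right (pow_le_pow_left₀ (by positivity) ?_ _)
            (mul_nonneg (hz j).le (hu j))
          rw [hεdef]; nlinarith [sq_nonneg (1 - ρ)]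
  -- step 2: sum and swap
  have step : ∑ r ∈ Finset.range (R + 1), z r * S r
      ≤ c * ∑ j ∈ Finset.range (R + 1),
          ∑ r ∈ Finset.Ico (j + 1) (R + 1), (1 - ε) ^ (r - j) * (z j * u j) := by
    calc ∑ r ∈ Finset.range (R + 1), z r * S r
        ≤ ∑ r ∈ Finset.range (R + 1),
            c * ∑ j ∈ Finset.range r, (1 - ε) ^ (r - j) * (z j * u j) :=
          Finset.sum_le_sum fun r _ => key r
      _ = c * ∑ r ∈ Finset.range (R + 1),
            ∑ j ∈ Finset.range r, (1 - ε) ^ (r - j) * (z j * u j) := by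
          rw [Finset.mul_sum]
      _ = c * ∑ j ∈ Finset.range (R + 1),
            ∑ r ∈ Finset.Ico (j + 1) (R + 1), (1 - ε) ^ (r - j) * (z j * u j) := by
          congr 1
          simp only [Finset.range_eq_Ico]
          exact (Finset.sum_Ico_Ico_comm' 0 (R + 1)
            (fun j r => (1 - ε) ^ (r - j) * (z j * u j))).symm
  refine step.trans ?_
  -- step 3: geometric bound for each j
  have geom : ∀ j, ∑ r ∈ Finset.Ico (j + 1) (R + 1), (1 - ε) ^ (r - j) ≤ 1 / ε := by
    intro j
    by_cases hjR : j + 1 ≤ R + 1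
    · rw [Finset.sum_Ico_eq_sum_range]
      have : ∀ k ∈ Finset.range (R + 1 - (j + 1)), (1 - ε) ^ (j + 1 + k - j) = (1 - ε) ^ (k + 1) := by
        intro k _; congr 1; omega
      rw [Finset.sum_congr rfl this]
      have hsum : ∑ k ∈ Finset.range (R + 1 - (j + 1)), (1 - ε) ^ (k + 1)
          ≤ ∑ k ∈ Finset.range (R + 2 - (j + 1)), (1 - ε) ^ k := by
        calc ∑ k ∈ Finset.range (R + 1 - (j + 1)), (1 - ε) ^ (k + 1)
            = ∑ k ∈ Finset.Ico 1 (R + 2 - (j + 1)), (1 - ε) ^ k := by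
              rw [Finset.sum_Ico_eq_sum_range]
              refine Finset.sum_congr (by congr 1; omega) fun k _ => by rw [add_comm 1 k]
          _ ≤ ∑ k ∈ Finset.range (R + 2 - (j + 1)), (1 - ε) ^ k := by
              rw [Finset.range_eq_Ico]
              refine Finset.sum_le_sum_of_subset_of_nonneg
                (Finset.Ico_subset_Ico (by omega) le_rfl) fun k _ _ => by positivity
      refine hsum.trans ?_
      have hne : (1 - ε) ≠ 1 := by linarith
      rw [geom_sum_eq hne]
      have heq : ((1 - ε) ^ (R + 2 - (j + 1)) - 1) / (1 - ε - 1)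
          = (1 - (1 - ε) ^ (R + 2 - (j + 1))) / ε := by
        rw [show (1 - ε - 1) = -ε by ring]
        rw [div_neg, ← neg_div]
        ring_nf
      rw [heq]
      have hp : (0:ℝ) ≤ (1 - ε) ^ (R + 2 - (j + 1)) := by positivity
      gcongr
      linarith
    · rw [Finset.Ico_eq_empty (by omega)]
      simp; positivity
  calc c * ∑ j ∈ Finset.range (R + 1),
          ∑ r ∈ Finset.Ico (j + 1) (R + 1), (1 - ε) ^ (r - j) * (z j * u j)
      ≤ c * ∑ j ∈ Finset.range (R + 1), (1 / ε) * (z j * u j) := by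
        refine mul_le_mul_of_nonneg_left (Finset.sum_le_sum fun j _ => ?_) hc
        rw [← Finset.sum_mul]
        exact mul_le_mul_of_nonneg_right (geom j) (mul_nonneg (hz j).le (hu j))
    _ = 8 * c / (1 - ρ) * ∑ j ∈ Finset.range (R + 1), z j * u j := by
        rw [← Finset.mul_sum, hεdef]
        field_simp
end
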